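/- arXiv:1805.04663 — 3 statements merged into one kernel-verified Lean document; each statement's English description precedes it below -/
import Mathlib

section
/- Let T > 0, α ∈ (0,1), and L, D ≥ 0 be such that |b(t) − b(s)| ≤ L|t−s|^α for all s, t ∈ [−T−1, 0], and |b(s)| ≤ D(1+|s|) for all s ≤ 0. Then there exists a constant C, depending only on L, D, T, α, such that for all μ ∈ (0,1]: sup_{t ∈ [−T,0]} |Φ_μ(t) − b(t)| ≤ C μ^α. (This is the pathwise Wong–Zakai approximation rate |Φ_μ(t) − b(t)| = O(μ^α) on compact time intervals.) -/
open MeasureTheory Set Real Filter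

namespace Stmt12Aux

lemma emb (t : ℝ) : MeasurableEmbedding (fun s : ℝ => t - s) :=
  (Homeomorph.subLeft t).measurableEmbedding

lemma map_sub_left (t : ℝ) : Measure.map (fun s : ℝ => t - s) (volume : Measure ℝ) = volume :=
  Measure.map_sub_left_eq_self volume t

lemma preim (t : ℝ) : (fun s : ℝ => t - s) ⁻¹' (Ioi 0) = Iio t := by
  ext s; simp [sub_pos]

lemma refl_integral (t : ℝ) (f : ℝ → ℝ) :
    (∫ s in Iic t, f (t - s)) = ∫ u in Ioi (0:ℝ), f u := by
  have h := (emb t).setIntegral_map (μ := volume) f (Ioi 0)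
  rw [map_sub_left, preim] at h
  rw [integral_Iic_eq_integral_Iio, ← h]

lemma refl_integrable {f : ℝ → ℝ} (t : ℝ) (hf : IntegrableOn f (Ioi 0)) :
    IntegrableOn (fun s => f (t - s)) (Iic t) := by
  have h := (emb t).integrableOn_map_iff (f := f) (s := Ioi 0) (μ := volume)
  rw [map_sub_left, preim] at h
  have : IntegrableOn (fun s => f (t - s)) (Iio t) := h.mp hf
  exact this.congr_set_ae (Iio_ae_eq_Iic (μ := volume)).symm

lemma integrable_exp_div (c : ℝ) (hc : 0 < c) :
    IntegrableOn (fun u : ℝ => Real.exp (-(u / c))) (Ioi 0) := by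
  have := exp_neg_integrableOn_Ioi (0:ℝ) (b := 1/c) (by positivity)
  refine this.congr_fun (fun u _ => ?_) measurableSet_Ioi
  ring_nf

lemma tendsto_exp_div (c : ℝ) (hc : 0 < c) :
    Tendsto (fun u : ℝ => Real.exp (-(u / c))) atTop (nhds 0) := by
  have h : Tendsto (fun u : ℝ => u / c) atTop atTop := tendsto_id.atTop_div_const hc
  exact Real.tendsto_exp_atBot.comp (tendsto_neg_atTop_atBot.comp h)

lemma integral_exp_div (c : ℝ) (hc : 0 < c) :
    (∫ u in Ioi (0:ℝ), Real.exp (-(u / c))) = c := by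
  have hderiv : ∀ x ∈ Ici (0:ℝ), HasDerivAt (fun u => -(c * Real.exp (-(u / c))))
      (Real.exp (-(x / c))) x := by
    intro x _
    have h1 : HasDerivAt (fun u : ℝ => -(u / c)) (-(1/c)) x := by
      simpa [Pi.neg_def] using ((hasDerivAt_id x).div_const c).neg
    have h2 := (h1.exp.const_mul c).neg
    refine h2.congr_deriv ?_
    field_simp
  have htend : Tendsto (fun u : ℝ => -(c * Real.exp (-(u / c)))) atTop (nhds 0) := by
    have := tendsto_exp_div c hc
    have h2 := (this.const_mul c).neg
    simpa using h2
  have := integral_Ioi_of_hasDerivAt_of_tendsto' hderiv (integrable_exp_div c hc) htend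
  simpa using this

lemma hasDerivAt_anti (c : ℝ) (hc : 0 < c) (x : ℝ) :
    HasDerivAt (fun u => -(Real.exp (-(u / c)) * (c * u + c ^ 2)))
      (Real.exp (-(x / c)) * x) x := by
  have h1 : HasDerivAt (fun u : ℝ => -(u / c)) (-(1/c)) x := by
    simpa [Pi.neg_def] using ((hasDerivAt_id x).div_const c).neg
  have h2 : HasDerivAt (fun u : ℝ => c * u + c ^ 2) c x := by
    simpa using ((hasDerivAt_id x).const_mul c).add_const (c ^ 2)
  have h3 := (h1.exp.mul h2).neg
  refine h3.congr_deriv ?_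
  field_simp
  ring

lemma tendsto_anti (c : ℝ) (hc : 0 < c) :
    Tendsto (fun u : ℝ => -(Real.exp (-(u / c)) * (c * u + c ^ 2))) atTop (nhds 0) := by
  have h1 : Tendsto (fun u : ℝ => Real.exp (-(u / c)) * u) atTop (nhds 0) := by
    have := tendsto_rpow_mul_exp_neg_mul_atTop_nhds_zero 1 (1/c) (by positivity)
    refine this.congr' ?_
    filter_upwards [eventually_ge_atTop (0:ℝ)] with u hu
    rw [Real.rpow_one]
    ring_nf
  have h2 := tendsto_exp_div c hc
  have h3 := ((h1.const_mul c).add (h2.const_mul (c^2))).neg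
  have h4 : (fun u : ℝ => -(c * (Real.exp (-(u / c)) * u) + c ^ 2 * Real.exp (-(u / c))))
      = fun u : ℝ => -(Real.exp (-(u / c)) * (c * u + c ^ 2)) := by
    funext u; ring
  rw [h4] at h3
  simpa using h3

lemma integrable_exp_div_mul (c : ℝ) (hc : 0 < c) :
    IntegrableOn (fun u : ℝ => Real.exp (-(u / c)) * u) (Ioi 0) := by
  refine integrableOn_Ioi_deriv_of_nonneg ?_ (fun x hx => hasDerivAt_anti c hc x)
    (fun x hx => mul_nonneg (Real.exp_pos _).le (le_of_lt hx)) (tendsto_anti c hc)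
  exact (hasDerivAt_anti c hc 0).continuousAt.continuousWithinAt

lemma integral_exp_div_mul (c : ℝ) (hc : 0 < c) :
    (∫ u in Ioi (0:ℝ), Real.exp (-(u / c)) * u) = c ^ 2 := by
  have := integral_Ioi_of_hasDerivAt_of_tendsto' (fun x _ => hasDerivAt_anti c hc x)
    (integrable_exp_div_mul c hc) (tendsto_anti c hc)
  simpa using this

end Stmt12Aux


open MeasureTheory

/-- The pathwise Ornstein–Uhlenbeck function
`z_μ(t) = (1/μ) b(t) - (1/μ²) ∫_{-∞}^t e^{-(t-s)/μ} b(s) ds`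
(the integration-by-parts form of `(1/μ) ∫_{-∞}^t e^{-(t-s)/μ} db(s)`). -/
noncomputable def zOU (b : ℝ → ℝ) (μ t : ℝ) : ℝ :=
  (1 / μ) * b t - (1 / μ ^ 2) * ∫ s in Set.Iic t, Real.exp (-(t - s) / μ) * b s

/-- The integrated Ornstein–Uhlenbeck process `Φ_μ(t) = ∫_0^t z_μ(s) ds`. -/
noncomputable def PhiOU (b : ℝ → ℝ) (μ t : ℝ) : ℝ :=
  ∫ s in (0:ℝ)..t, zOU b μ s

set_option maxHeartbeats 2000000 in
/-- Let `T > 0`, `α ∈ (0,1)`, `L, D ≥ 0`. There is a constant `C`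
depending only on `L, D, T, α` such that: for any driving path `b` that is `α`-Hölder
with constant `L` on `[-T-1, 0]` and satisfies `|b(s)| ≤ D(1+|s|)` for `s ≤ 0`, and for
all `μ ∈ (0,1]`, one has `sup_{t ∈ [-T,0]} |Φ_μ(t) - b(t)| ≤ C μ^α` — the pathwise
Wong–Zakai approximation rate on compact time intervals. -/
theorem stmt12 (T α L D : ℝ) (hT : 0 < T) (hα : α ∈ Set.Ioo (0:ℝ) 1)
    (hL : 0 ≤ L) (hD : 0 ≤ D) :
    ∃ C : ℝ, ∀ b : ℝ → ℝ, Continuous b → b 0 = 0 →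
      Filter.Tendsto (fun s : ℝ => b s / s) Filter.atBot (nhds 0) →
      (∀ s ∈ Set.Icc (-T - 1) (0:ℝ), ∀ t ∈ Set.Icc (-T - 1) (0:ℝ),
        |b t - b s| ≤ L * |t - s| ^ α) →
      (∀ s : ℝ, s ≤ 0 → |b s| ≤ D * (1 + |s|)) →
      ∀ μ ∈ Set.Ioc (0:ℝ) 1, ∀ t ∈ Set.Icc (-T) (0:ℝ),
        |PhiOU b μ t - b t| ≤ C * μ ^ α := by
  obtain ⟨hα0, hα1⟩ := hα
  refine ⟨2 * (2 * L + 96 * (D * (2 + 2 * T))), ?_⟩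
  intro b hb hb0 _ hHolder hGrowth μ hμ t ht
  obtain ⟨hμ0, hμ1⟩ := hμ
  obtain ⟨htT, ht0⟩ := ht
  set K := D * (2 + 2 * T) with hK
  have hK0 : 0 ≤ K := by positivity
  set f : ℝ → ℝ := fun s => Real.exp (s / μ) * b s with hf
  have hfc : Continuous f := (Real.continuous_exp.comp (continuous_id.div_const μ)).mul hb
  -- integrability of f on every Iic r
  have hint : ∀ r : ℝ, IntegrableOn f (Iic r) := by
    intro r
    have base : IntegrableOn f (Iic 0) := by
      have hFint : IntegrableOn
          (fun u : ℝ => D * (Real.exp (-(u/μ)) + Real.exp (-(u/μ)) * u)) (Ioi 0) :=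
        ((Stmt12Aux.integrable_exp_div μ hμ0).add
          (Stmt12Aux.integrable_exp_div_mul μ hμ0)).const_mul D
      have hM := Stmt12Aux.refl_integrable 0 hFint
      refine Integrable.mono' hM hfc.aestronglyMeasurable.restrict ?_
      filter_upwards [ae_restrict_mem measurableSet_Iic] with s hs
      have hs0 : s ≤ 0 := hs
      have h1 : |b s| ≤ D * (1 + |s|) := hGrowth s hs0
      have habs : |s| = 0 - s := by rw [abs_of_nonpos hs0]; ring
      have hnorm : ‖f s‖ = Real.exp (s/μ) * |b s| := by
        rw [hf]; rw [Real.norm_eq_abs, abs_mul, abs_of_pos (Real.exp_pos _)]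
      rw [hnorm]
      have hexp : Real.exp (s / μ) = Real.exp (-((0 - s)/μ)) := by
        rw [show s/μ = -((0-s)/μ) by ring]
      calc Real.exp (s/μ) * |b s| ≤ Real.exp (s/μ) * (D * (1 + |s|)) :=
            mul_le_mul_of_nonneg_left h1 (Real.exp_pos _).le
        _ = D * (Real.exp (-((0-s)/μ)) + Real.exp (-((0-s)/μ)) * (0 - s)) := by
            rw [hexp, habs]; ring
    rcases le_or_gt r 0 with hr | hr
    · exact base.mono_set (Iic_subset_Iic.mpr hr)
    · have h2 : IntegrableOn f (Ioc 0 r) := hfc.integrableOn_Ioc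
      have h3 := base.union h2
      rwa [Iic_union_Ioc_eq_Iic hr.le] at h3
  -- derivative of the running integral
  have hg : ∀ r : ℝ, HasDerivAt (fun x => ∫ s in Iic x, f s) (f r) r := by
    intro r
    have hkey : (fun x => ∫ s in Iic x, f s)
        = fun x => (∫ s in Iic (r-1), f s) + ∫ s in (r-1)..x, f s := by
      funext x
      rw [← intervalIntegral.integral_Iic_sub_Iic (hint (r-1)) (hint x)]
      ring
    rw [hkey]
    exact ((hfc.integral_hasStrictDerivAt (r-1) r).hasDerivAt).const_add _
  have hgc : Continuous (fun x => ∫ s in Iic x, f s) :=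
    continuous_iff_continuousAt.mpr fun r => (hg r).continuousAt
  have key_exp : ∀ r s : ℝ, Real.exp (-(r - s)/μ) = Real.exp (-r/μ) * Real.exp (s/μ) := by
    intro r s; rw [← Real.exp_add]; congr 1; ring
  have hIic_eq : ∀ r : ℝ, (∫ s in Iic r, Real.exp (-(r - s)/μ) * b s)
      = Real.exp (-r/μ) * ∫ s in Iic r, f s := by
    intro r
    rw [← integral_const_mul]
    refine setIntegral_congr_fun measurableSet_Iic (fun s _ => ?_)
    rw [key_exp r s, hf]; ring
  have zeq : ∀ r : ℝ, zOU b μ r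
      = (1/μ) * b r - (1/μ^2) * (Real.exp (-r/μ) * ∫ s in Iic r, f s) := by
    intro r; rw [zOU, hIic_eq r]
  -- y and its derivative
  have hy : ∀ r : ℝ, HasDerivAt (fun x => (1/μ) * (Real.exp (-x/μ) * ∫ s in Iic x, f s))
      (zOU b μ r) r := by
    intro r
    have h1 : HasDerivAt (fun x : ℝ => -x/μ) (-1/μ) r := by
      simpa using (hasDerivAt_id r).neg.div_const μ
    have h2 := (h1.exp.mul (hg r)).const_mul (1/μ)
    refine h2.congr_deriv ?_
    rw [zeq r]
    have h3 : Real.exp (-r/μ) * f r = b r := by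
      rw [hf]
      rw [← mul_assoc, ← Real.exp_add, show -r/μ + r/μ = 0 by ring, Real.exp_zero, one_mul]
    rw [h3]
    ring
  have hcontz : Continuous (zOU b μ) := by
    have hzf : zOU b μ = fun r => (1/μ) * b r
        - (1/μ^2) * (Real.exp (-r/μ) * ∫ s in Iic r, f s) := funext zeq
    rw [hzf]
    exact (continuous_const.mul hb).sub (continuous_const.mul
      ((Real.continuous_exp.comp (continuous_id.neg.div_const μ)).mul hgc))
  have hPhi : PhiOU b μ t = (1/μ) * (Real.exp (-t/μ) * ∫ s in Iic t, f s)
      - (1/μ) * (Real.exp (-(0:ℝ)/μ) * ∫ s in Iic (0:ℝ), f s) := by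
    rw [PhiOU]
    exact intervalIntegral.integral_eq_sub_of_hasDerivAt (fun x _ => hy x)
      (hcontz.intervalIntegrable 0 t)
  -- the key estimate
  have hest : ∀ r : ℝ, -T ≤ r → r ≤ 0 →
      |(1/μ) * (Real.exp (-r/μ) * ∫ s in Iic r, f s) - b r| ≤ (2*L + 96*K) * μ ^ α := by
    intro r hrT hr0
    have hIr : IntegrableOn (fun s => Real.exp (-(r-s)/μ) * b s) (Iic r) := by
      have heq : (fun s => Real.exp (-(r-s)/μ) * b s) = fun s => Real.exp (-r/μ) * f s := by
        funext s; rw [key_exp r s, hf]; ring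
      rw [heq]; exact (hint r).const_mul _
    have hIconst : IntegrableOn (fun s => Real.exp (-(r-s)/μ) * b r) (Iic r) := by
      have h1 := (Stmt12Aux.refl_integrable r
        (Stmt12Aux.integrable_exp_div μ hμ0)).mul_const (b r)
      exact MeasureTheory.IntegrableOn.congr_fun h1 (fun s _ => by rw [neg_div])
        measurableSet_Iic
    have hker : (∫ s in Iic r, Real.exp (-(r-s)/μ)) = μ := by
      have heq : (fun s : ℝ => Real.exp (-(r-s)/μ))
          = fun s => Real.exp (-((r-s)/μ)) := by
        funext s; rw [neg_div]
      have h2 : (∫ s in Iic r, Real.exp (-((r - s)/μ)))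
          = ∫ u in Ioi (0:ℝ), Real.exp (-(u/μ)) :=
        Stmt12Aux.refl_integral r (fun u => Real.exp (-(u/μ)))
      rw [heq, h2, Stmt12Aux.integral_exp_div μ hμ0]
    have hrepr : (1/μ) * (Real.exp (-r/μ) * ∫ s in Iic r, f s) - b r
        = (1/μ) * ∫ s in Iic r, Real.exp (-(r-s)/μ) * (b s - b r) := by
      have hsplit : (∫ s in Iic r, Real.exp (-(r-s)/μ) * (b s - b r))
          = (∫ s in Iic r, Real.exp (-(r-s)/μ) * b s)
            - (∫ s in Iic r, Real.exp (-(r-s)/μ)) * b r := by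
        rw [← integral_mul_const, ← integral_sub hIr hIconst]
        refine setIntegral_congr_fun measurableSet_Iic (fun s _ => ?_)
        ring
      rw [hsplit, hker, hIic_eq r]
      field_simp
    set c2 : ℝ := K * Real.exp (-(1/(2*μ))) with hc2
    set Mfun : ℝ → ℝ := fun u => L * μ^α * (Real.exp (-(u/μ)) + Real.exp (-(u/μ)) * u / μ)
        + c2 * (Real.exp (-(u/2)) + Real.exp (-(u/2)) * u) with hM
    have i1 : IntegrableOn (fun u : ℝ =>
        Real.exp (-(u/μ)) + Real.exp (-(u/μ)) * u / μ) (Ioi 0) :=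
      (Stmt12Aux.integrable_exp_div μ hμ0).add
        ((Stmt12Aux.integrable_exp_div_mul μ hμ0).div_const μ)
    have i2 : IntegrableOn (fun u : ℝ =>
        Real.exp (-(u/2)) + Real.exp (-(u/2)) * u) (Ioi 0) :=
      (Stmt12Aux.integrable_exp_div 2 two_pos).add
        (Stmt12Aux.integrable_exp_div_mul 2 two_pos)
    have hMint : IntegrableOn Mfun (Ioi 0) := (i1.const_mul _).add (i2.const_mul _)
    have e1 : (∫ u in Ioi (0:ℝ), (Real.exp (-(u/μ)) + Real.exp (-(u/μ)) * u / μ)) = 2*μ := by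
      rw [integral_add (Stmt12Aux.integrable_exp_div μ hμ0)
        ((Stmt12Aux.integrable_exp_div_mul μ hμ0).div_const μ), integral_div,
        Stmt12Aux.integral_exp_div μ hμ0, Stmt12Aux.integral_exp_div_mul μ hμ0]
      field_simp
      ring
    have e2 : (∫ u in Ioi (0:ℝ), (Real.exp (-(u/2)) + Real.exp (-(u/2)) * u)) = 6 := by
      rw [integral_add (Stmt12Aux.integrable_exp_div 2 two_pos)
        (Stmt12Aux.integrable_exp_div_mul 2 two_pos),
        Stmt12Aux.integral_exp_div 2 two_pos, Stmt12Aux.integral_exp_div_mul 2 two_pos]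
      norm_num
    have hMval : (∫ u in Ioi (0:ℝ), Mfun u) = L * μ^α * (2*μ) + c2 * 6 := by
      rw [hM]
      rw [integral_add (i1.const_mul _) (i2.const_mul _), integral_const_mul,
        integral_const_mul, e1, e2]
    have hpt : ∀ s ∈ Iic r, |Real.exp (-(r-s)/μ) * (b s - b r)| ≤ Mfun (r - s) := by
      intro s hs
      have hsr : s ≤ r := hs
      have hu0 : 0 ≤ r - s := by linarith
      have hE : Real.exp (-(r-s)/μ) = Real.exp (-((r-s)/μ)) := by rw [neg_div]
      have habs : |Real.exp (-(r-s)/μ) * (b s - b r)|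
          = Real.exp (-((r-s)/μ)) * |b s - b r| := by
        rw [abs_mul, abs_of_pos (Real.exp_pos _), hE]
      rw [habs, hM]
      have a1 : (0:ℝ) ≤ Real.exp (-((r-s)/μ)) := (Real.exp_pos _).le
      have a1' : (0:ℝ) ≤ Real.exp (-((r-s)/2)) := (Real.exp_pos _).le
      have hnn1 : 0 ≤ L * μ^α *
          (Real.exp (-((r-s)/μ)) + Real.exp (-((r-s)/μ)) * (r-s) / μ) := by
        have a2 : 0 ≤ Real.exp (-((r-s)/μ)) * (r-s) / μ :=
          div_nonneg (mul_nonneg a1 hu0) hμ0.le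
        have a3 : 0 ≤ L * μ^α := mul_nonneg hL (Real.rpow_nonneg hμ0.le _)
        exact mul_nonneg a3 (by linarith)
      have hnn2 : 0 ≤ c2 * (Real.exp (-((r-s)/2)) + Real.exp (-((r-s)/2)) * (r-s)) := by
        have a2 : 0 ≤ Real.exp (-((r-s)/2)) * (r-s) := mul_nonneg a1' hu0
        exact mul_nonneg (mul_nonneg hK0 (Real.exp_pos _).le) (by linarith)
      rcases le_or_gt (r - s) 1 with hcase | hcase
      · have hsI : s ∈ Icc (-T - 1) (0:ℝ) := ⟨by linarith, by linarith⟩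
        have hrI : r ∈ Icc (-T - 1) (0:ℝ) := ⟨by linarith, hr0⟩
        have hH := hHolder s hsI r hrI
        have hH' : |b s - b r| ≤ L * (r-s)^α := by
          rw [abs_sub_comm]; rwa [abs_of_nonneg hu0] at hH
        have hv0 : 0 ≤ (r-s)/μ := div_nonneg hu0 hμ0.le
        have hpow : (r-s)^α ≤ μ^α * (1 + (r-s)/μ) := by
          have hv : ((r-s)/μ)^α ≤ 1 + (r-s)/μ := by
            rcases le_or_gt ((r-s)/μ) 1 with h | h
            · have := Real.rpow_le_one hv0 h hα0.le
              linarith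
            · have h2 := Real.rpow_le_rpow_of_exponent_le h.le hα1.le
              rw [Real.rpow_one] at h2
              linarith
          calc (r-s)^α = (μ * ((r-s)/μ))^α := by rw [mul_div_cancel₀ _ (ne_of_gt hμ0)]
            _ = μ^α * ((r-s)/μ)^α := Real.mul_rpow hμ0.le hv0
            _ ≤ μ^α * (1 + (r-s)/μ) :=
                mul_le_mul_of_nonneg_left hv (Real.rpow_nonneg hμ0.le _)
        calc Real.exp (-((r-s)/μ)) * |b s - b r|
            ≤ Real.exp (-((r-s)/μ)) * (L * (μ^α * (1 + (r-s)/μ))) := by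
              refine mul_le_mul_of_nonneg_left (hH'.trans ?_) a1
              exact mul_le_mul_of_nonneg_left hpow hL
          _ = L * μ^α * (Real.exp (-((r-s)/μ)) + Real.exp (-((r-s)/μ)) * (r-s) / μ) := by
              ring
          _ ≤ _ := by linarith
      · have hs0' : s ≤ 0 := le_trans hsr hr0
        have hbs := hGrowth s hs0'
        have hbr := hGrowth r hr0
        have hrabs : |r| ≤ T := abs_le.mpr ⟨hrT, hr0.trans hT.le⟩
        have hsabs : |s| ≤ T + (r - s) := by
          rw [abs_of_nonpos hs0']
          have h5 : -r ≤ T := by linarith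
          linarith
        have hdiff : |b s - b r| ≤ K * (1 + (r-s)) := by
          have h1 : |b s - b r| ≤ |b s| + |b r| := abs_sub _ _
          have h2 : |b r| ≤ D * (1 + T) := by
            calc |b r| ≤ D * (1 + |r|) := hbr
              _ ≤ D * (1 + T) := by nlinarith [hrabs]
          have h3 : |b s| ≤ D * (1 + T + (r - s)) := by
            calc |b s| ≤ D * (1 + |s|) := hbs
              _ ≤ _ := by nlinarith
          rw [hK]
          nlinarith [mul_nonneg hD hu0, mul_nonneg (mul_nonneg hD hT.le) hu0]
        have hexp2 : Real.exp (-((r-s)/μ))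
            ≤ Real.exp (-(1/(2*μ))) * Real.exp (-((r-s)/2)) := by
          rw [← Real.exp_add]
          apply Real.exp_le_exp.mpr
          have b1 : 1/(2*μ) ≤ (r-s)/(2*μ) := by gcongr
          have b2 : (r-s)/2 ≤ (r-s)/(2*μ) := by
            rw [div_le_div_iff_of_pos_left (by linarith) (by positivity) (by positivity)]
            nlinarith
          have b3 : (r-s)/(2*μ) + (r-s)/(2*μ) = (r-s)/μ := by ring
          linarith
        calc Real.exp (-((r-s)/μ)) * |b s - b r|
            ≤ (Real.exp (-(1/(2*μ))) * Real.exp (-((r-s)/2))) * (K * (1 + (r-s))) := by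
              apply mul_le_mul hexp2 hdiff (abs_nonneg _) (by positivity)
          _ = c2 * (Real.exp (-((r-s)/2)) + Real.exp (-((r-s)/2)) * (r-s)) := by
              rw [hc2]; ring
          _ ≤ _ := by linarith
    have hIdiff : IntegrableOn (fun s => Real.exp (-(r-s)/μ) * (b s - b r)) (Iic r) := by
      exact MeasureTheory.IntegrableOn.congr_fun (hIr.sub hIconst)
        (fun s _ => by simp only [Pi.sub_apply]; ring) measurableSet_Iic
    have hMrefl : IntegrableOn (fun s => Mfun (r - s)) (Iic r) :=
      Stmt12Aux.refl_integrable r hMint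
    have hbound : |∫ s in Iic r, Real.exp (-(r-s)/μ) * (b s - b r)|
        ≤ L * μ^α * (2*μ) + c2 * 6 := by
      calc |∫ s in Iic r, Real.exp (-(r-s)/μ) * (b s - b r)|
          ≤ ∫ s in Iic r, |Real.exp (-(r-s)/μ) * (b s - b r)| := by
            simpa only [Real.norm_eq_abs] using norm_integral_le_integral_norm
              (μ := volume.restrict (Iic r))
              (fun s => Real.exp (-(r-s)/μ) * (b s - b r))
        _ ≤ ∫ s in Iic r, Mfun (r-s) :=
            setIntegral_mono_on hIdiff.abs hMrefl measurableSet_Iic hpt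
        _ = L * μ^α * (2*μ) + c2 * 6 := by rw [Stmt12Aux.refl_integral r Mfun, hMval]
    have h16 : Real.exp (-(1/(2*μ))) ≤ 16 * μ^2 := by
      have h1 : 1/(4*μ) ≤ Real.exp (1/(4*μ)) := by
        have := Real.add_one_le_exp (1/(4*μ)); linarith
      have h2 : (1/(4*μ))^2 ≤ Real.exp (1/(4*μ))^2 := by
        apply pow_le_pow_left₀ (by positivity) h1
      have h3 : Real.exp (1/(4*μ))^2 = Real.exp (1/(2*μ)) := by
        rw [sq, ← Real.exp_add]; congr 1; ring
      have h4 : 1/(16*μ^2) ≤ Real.exp (1/(2*μ)) := by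
        rw [← h3]
        calc 1/(16*μ^2) = (1/(4*μ))^2 := by ring
          _ ≤ _ := h2
      rw [Real.exp_neg]
      calc (Real.exp (1/(2*μ)))⁻¹ ≤ (1/(16*μ^2))⁻¹ := inv_anti₀ (by positivity) h4
        _ = 16*μ^2 := by rw [one_div, inv_inv]
    have hμα : μ ≤ μ^α := by
      have := Real.rpow_le_rpow_of_exponent_ge hμ0 hμ1 hα1.le
      rwa [Real.rpow_one] at this
    have hμα0 : (0:ℝ) ≤ μ^α := Real.rpow_nonneg hμ0.le _
    rw [hrepr]
    calc |(1/μ) * ∫ s in Iic r, Real.exp (-(r-s)/μ) * (b s - b r)|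
        = (1/μ) * |∫ s in Iic r, Real.exp (-(r-s)/μ) * (b s - b r)| := by
          rw [abs_mul, abs_of_pos (by positivity : (0:ℝ) < 1/μ)]
      _ ≤ (1/μ) * (L * μ^α * (2*μ) + c2 * 6) :=
          mul_le_mul_of_nonneg_left hbound (by positivity)
      _ ≤ (2*L + 96*K) * μ^α := by
          rw [hc2]
          have expand : (1/μ) * (L * μ^α * (2*μ) + K * Real.exp (-(1/(2*μ))) * 6)
              = 2*L*μ^α + 6*(K*Real.exp (-(1/(2*μ))))/μ := by
            field_simp
          rw [expand]
          have s1 : 6*(K*Real.exp (-(1/(2*μ))))/μ ≤ 6*(K*(16*μ^2))/μ := by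
            gcongr
          have s2 : 6*(K*(16*μ^2))/μ = 96*K*μ := by
            field_simp
            ring
          have s3 : 96*K*μ ≤ 96*K*μ^α := by nlinarith
          nlinarith
  have e0 := hest 0 (by linarith) le_rfl
  have et := hest t htT ht0
  have hrw : PhiOU b μ t - b t
      = ((1/μ) * (Real.exp (-t/μ) * ∫ s in Iic t, f s) - b t)
        - ((1/μ) * (Real.exp (-(0:ℝ)/μ) * ∫ s in Iic (0:ℝ), f s) - b 0) := by
    rw [hPhi, hb0]; ring
  rw [hrw, sub_eq_add_neg]
  calc |_ + _| ≤ _ := abs_add_le _ _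
    _ ≤ (2*L + 96*K) * μ ^ α + (2*L + 96*K) * μ ^ α := by
        rw [abs_neg]; exact add_le_add et e0
    _ = 2 * (2 * L + 96 * (D * (2 + 2 * T))) * μ ^ α := by rw [hK]; ring
end

section
/- Let ε > 0, ρ ∈ (0, γ₁), and c, δ ≥ 0. Let ψ : (−∞,0] → ℝ be continuous with |ψ(t)| ≤ c + δ|t| for all t ≤ 0, and define D(t) = (1/√ε) ( σ ψ(t) + (1/ε) ∫_{−∞}^t S((t−s)/ε) σ' ψ(s) ds ) for t ≤ 0. Then sup_{t ≤ 0} e^{(ρ/ε)t} ‖D(t)‖ ≤ (1/√ε) [ (c + δε/ρ) ‖σ‖ + ( c/γ₁ + δε/(γ₁ρ) + δε/γ₁² ) ‖σ'‖ ]. In particular the weighted norm of D is controlled linearly by the bound c on ψ near 0 and the sublinear growth rate δ of ψ at −∞. -/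
open MeasureTheory

private lemma aux_neg_mul_exp_le {a t : ℝ} (ha : 0 < a) : (-t) * Real.exp (a * t) ≤ 1 / a := by
  rcases le_or_gt 0 t with h | h
  · have : (-t) * Real.exp (a * t) ≤ 0 := by
      apply mul_nonpos_of_nonpos_of_nonneg (by linarith) (Real.exp_nonneg _)
    have : (0:ℝ) ≤ 1 / a := by positivity
    linarith
  · have h2 : -(a*t) ≤ Real.exp (-(a*t)) := by
      have := Real.add_one_le_exp (-(a*t)); linarith
    have h1 : -(a*t) * Real.exp (a*t) ≤ 1 := by
      calc -(a*t) * Real.exp (a*t) ≤ Real.exp (-(a*t)) * Real.exp (a*t) := by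
            apply mul_le_mul_of_nonneg_right h2 (Real.exp_nonneg _)
        _ = 1 := by rw [← Real.exp_add]; simp
    have : (-t) * Real.exp (a*t) = (-(a*t) * Real.exp (a*t)) / a := by
      field_simp
    rw [this]
    gcongr

private lemma aux_hasDerivAt_exp_neg_mul (b u : ℝ) :
    HasDerivAt (fun x : ℝ => Real.exp (-b * x)) (-b * Real.exp (-b * u)) u := by
  have h := (Real.hasDerivAt_exp (-b * u)).comp u ((hasDerivAt_id u).const_mul (-b))
  simpa [Function.comp_def, mul_comm] using h

/-- Let `ε > 0`, `ρ ∈ (0, γ₁)`, `c, δ ≥ 0`, and `ψ : (-∞,0] → ℝ`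
continuous with `|ψ(t)| ≤ c + δ|t|` for all `t ≤ 0`. Define
`D(t) = (1/√ε)(σ ψ(t) + (1/ε) ∫_{-∞}^t S((t-s)/ε) σ' ψ(s) ds)` for `t ≤ 0`. Then
`sup_{t ≤ 0} e^{(ρ/ε)t} ‖D(t)‖
  ≤ (1/√ε) [ (c + δε/ρ)‖σ‖ + (c/γ₁ + δε/(γ₁ρ) + δε/γ₁²)‖σ'‖ ]`. -/
theorem stmt14
    {H₁ : Type*} [NormedAddCommGroup H₁] [InnerProductSpace ℝ H₁] [CompleteSpace H₁]
    [TopologicalSpace.SeparableSpace H₁]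
    (S : ℝ → H₁ →L[ℝ] H₁) (γ₁ : ℝ) (hγ₁ : 0 < γ₁)
    (hS0 : S 0 = 1)
    (hSadd : ∀ t s : ℝ, 0 ≤ t → 0 ≤ s → S (t + s) = (S t).comp (S s))
    (hScont : ∀ x : H₁, ContinuousOn (fun t : ℝ => S t x) (Set.Ici 0))
    (hSdecay : ∀ t : ℝ, 0 ≤ t → ∀ x : H₁, ‖S t x‖ ≤ Real.exp (-γ₁ * t) * ‖x‖)
    (σ σ' : H₁)
    (ε ρ : ℝ) (hε : 0 < ε) (hρ : 0 < ρ) (hργ : ρ < γ₁)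
    (c δ : ℝ) (hc : 0 ≤ c) (hδ : 0 ≤ δ)
    (ψ : ℝ → ℝ) (hψc : ContinuousOn ψ (Set.Iic 0))
    (hψ : ∀ t : ℝ, t ≤ 0 → |ψ t| ≤ c + δ * |t|)
    (D : ℝ → H₁)
    (hD : ∀ t : ℝ, t ≤ 0 →
      D t = (Real.sqrt ε)⁻¹ •
        (ψ t • σ + ε⁻¹ • ∫ s in Set.Iic t, ψ s • S ((t - s) / ε) σ')) :
    ∀ t : ℝ, t ≤ 0 →
      Real.exp (ρ / ε * t) * ‖D t‖ ≤
        (Real.sqrt ε)⁻¹ *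
          ((c + δ * ε / ρ) * ‖σ‖ +
            (c / γ₁ + δ * ε / (γ₁ * ρ) + δ * ε / γ₁ ^ 2) * ‖σ'‖) := by
  intro t ht
  set b : ℝ := γ₁ / ε with hbdef
  have hb : 0 < b := div_pos hγ₁ hε
  -- the dominating function on the `u = t - s ≥ 0` side
  set F : ℝ → ℝ := fun u => (c + δ * (u - t)) * Real.exp (-b * u) with hFdef
  -- antiderivative
  set A : ℝ := (-δ/b - c + δ*t)/b with hA
  set B : ℝ := -δ/b with hB
  set g : ℝ → ℝ := fun u => (A + B * u) * Real.exp (-b * u) with hgdef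
  have hderiv : ∀ u : ℝ, HasDerivAt g (F u) u := by
    intro u
    have h1 : HasDerivAt (fun u : ℝ => A + B * u) B u := by
      simpa using ((hasDerivAt_id u).const_mul B).const_add A
    have : HasDerivAt (fun u : ℝ => (A + B * u) * Real.exp (-b * u)) _ u :=
      h1.mul (aux_hasDerivAt_exp_neg_mul b u)
    convert this using 1
    simp only [hFdef, hA, hB]
    field_simp
    ring
  have hFnonneg : ∀ u ∈ Set.Ioi (0:ℝ), 0 ≤ F u := by
    intro u hu
    have : (0:ℝ) ≤ c + δ * (u - t) := by
      have : (0:ℝ) ≤ u - t := by simp at hu; linarith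
      positivity
    positivity
  have hgtend : Filter.Tendsto g Filter.atTop (nhds 0) := by
    have h1 : Filter.Tendsto (fun u : ℝ => Real.exp (-(b * u))) Filter.atTop (nhds 0) :=
      Real.tendsto_exp_neg_atTop_nhds_zero.comp
        (Filter.Tendsto.const_mul_atTop hb Filter.tendsto_id)
    have h2 : Filter.Tendsto (fun u : ℝ => (b*u) * Real.exp (-(b * u))) Filter.atTop (nhds 0) := by
      have := (Real.tendsto_pow_mul_exp_neg_atTop_nhds_zero 1).comp
        (Filter.Tendsto.const_mul_atTop hb (Filter.tendsto_id (α := ℝ)))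
      simpa [Function.comp_def] using this
    have : Filter.Tendsto (fun u : ℝ =>
        A * Real.exp (-(b*u)) + (B/b) * ((b*u) * Real.exp (-(b*u)))) Filter.atTop
        (nhds (A * 0 + (B/b) * 0)) := ((h1.const_mul A).add (h2.const_mul (B/b)))
    simp only [mul_zero, add_zero] at this
    apply this.congr
    intro u
    simp only [hgdef, neg_mul]
    field_simp
  have hFint : IntegrableOn F (Set.Ioi 0) :=
    integrableOn_Ioi_deriv_of_nonneg' (fun u _ => hderiv u) hFnonneg hgtend
  have hFval : ∫ u in Set.Ioi (0:ℝ), F u = (c + δ * (-t))/b + δ/b^2 := by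
    rw [integral_Ioi_of_hasDerivAt_of_nonneg' (fun u _ => hderiv u) hFnonneg hgtend]
    simp only [hgdef, hA, hB, mul_zero, add_zero, neg_zero, Real.exp_zero]
    field_simp
    ring
  -- transfer to the `s ≤ t` side
  have hemb : MeasurableEmbedding (fun s : ℝ => t - s) := by
    have : (fun s : ℝ => t - s) = (fun x : ℝ => t + x) ∘ (fun x : ℝ => -x) := by
      ext x; simp [sub_eq_add_neg]
    rw [this]
    exact ((Homeomorph.addLeft t).isClosedEmbedding.measurableEmbedding).comp
      ((Homeomorph.neg ℝ).isClosedEmbedding.measurableEmbedding)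
  have hmap : Measure.map (fun s : ℝ => t - s) volume = volume := by
    have : (fun s : ℝ => t - s) = (fun x : ℝ => t + x) ∘ (fun x : ℝ => -x) := by
      ext x; simp [sub_eq_add_neg]
    rw [this, ← Measure.map_map (measurable_const_add t) measurable_neg,
      Measure.map_neg_eq_self (volume : Measure ℝ)]
    exact MeasureTheory.map_add_left_eq_self volume t
  have hpre : (fun s : ℝ => t - s) ⁻¹' (Set.Ioi 0) = Set.Iio t := by
    ext s; simp [Set.mem_Ioi, Set.mem_Iio, sub_pos]
  have htrans_int : IntegrableOn (fun s => F (t - s)) (Set.Iic t) := by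
    rw [integrableOn_Iic_iff_integrableOn_Iio]
    have := (hemb.integrableOn_map_iff (f := F) (s := Set.Ioi 0) (μ := volume)).mp
    rw [hmap] at this
    have h2 := this hFint
    rwa [hpre] at h2
  have htrans_val : ∫ s in Set.Iic t, F (t - s) = (c + δ * (-t))/b + δ/b^2 := by
    rw [integral_Iic_eq_integral_Iio, ← hpre]
    rw [← hFval]
    conv_rhs => rw [← hmap]
    exact (hemb.setIntegral_map F (Set.Ioi 0)).symm
  -- bound the Bochner integral
  set I : H₁ := ∫ s in Set.Iic t, ψ s • S ((t - s) / ε) σ' with hI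
  have hnormI : ‖I‖ ≤ ((c + δ * (-t))/b + δ/b^2) * ‖σ'‖ := by
    rw [← htrans_val]
    have hInt' : Integrable (fun s => F (t - s) * ‖σ'‖)
        (volume.restrict (Set.Iic t)) := htrans_int.mul_const _
    have hbd : ∀ᵐ s ∂(volume.restrict (Set.Iic t)),
        ‖ψ s • S ((t - s) / ε) σ'‖ ≤ F (t - s) * ‖σ'‖ := by
      filter_upwards [ae_restrict_mem measurableSet_Iic] with s hs
      have hst : s ≤ t := hs
      have hts : 0 ≤ (t - s) / ε := div_nonneg (by linarith) hε.le
      have h1 : ‖S ((t - s) / ε) σ'‖ ≤ Real.exp (-γ₁ * ((t - s)/ε)) * ‖σ'‖ :=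
        hSdecay _ hts σ'
      have h2 : |ψ s| ≤ c + δ * (t - s - t) := by
        have := hψ s (hst.trans ht)
        have habs : |s| = t - s - t := by
          rw [abs_of_nonpos (hst.trans ht)]; ring
        rwa [habs] at this
      have hexp_eq : Real.exp (-γ₁ * ((t - s)/ε)) = Real.exp (-b * (t - s)) := by
        rw [hbdef]; congr 1; field_simp
      rw [norm_smul, Real.norm_eq_abs, hFdef]
      calc |ψ s| * ‖S ((t - s) / ε) σ'‖
          ≤ (c + δ * (t - s - t)) * (Real.exp (-γ₁ * ((t - s)/ε)) * ‖σ'‖) := by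
            apply mul_le_mul h2 h1 (norm_nonneg _)
            have : (0:ℝ) ≤ t - s - t := by linarith
            positivity
        _ = (c + δ * ((t - s) - t)) * Real.exp (-b * (t - s)) * ‖σ'‖ := by
            rw [hexp_eq]; ring
    calc ‖I‖ ≤ ∫ s in Set.Iic t, F (t - s) * ‖σ'‖ :=
          norm_integral_le_of_norm_le hInt' hbd
      _ = (∫ s in Set.Iic t, F (t - s)) * ‖σ'‖ := by
          rw [integral_mul_const]
  -- key scalar bounds
  have hexple : Real.exp (ρ / ε * t) ≤ 1 := by
    apply Real.exp_le_one_iff.mpr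
    have : 0 < ρ / ε := by positivity
    exact mul_nonpos_of_nonneg_of_nonpos this.le ht
  have hexppos : (0:ℝ) < Real.exp (ρ / ε * t) := Real.exp_pos _
  have hkey : (-t) * Real.exp (ρ / ε * t) ≤ ε / ρ := by
    have := aux_neg_mul_exp_le (t := t) (a := ρ / ε) (by positivity)
    calc (-t) * Real.exp (ρ / ε * t) ≤ 1 / (ρ / ε) := this
      _ = ε / ρ := by field_simp
  -- assemble
  rw [hD t ht]
  rw [norm_smul, Real.norm_eq_abs, abs_of_nonneg (by positivity : (0:ℝ) ≤ (Real.sqrt ε)⁻¹)]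
  rw [mul_comm (Real.exp (ρ / ε * t)), mul_assoc]
  apply mul_le_mul_of_nonneg_left _ (by positivity : (0:ℝ) ≤ (Real.sqrt ε)⁻¹)
  have htri : ‖ψ t • σ + ε⁻¹ • I‖ ≤ |ψ t| * ‖σ‖ + ε⁻¹ * ‖I‖ := by
    calc ‖ψ t • σ + ε⁻¹ • I‖ ≤ ‖ψ t • σ‖ + ‖ε⁻¹ • I‖ := norm_add_le _ _
      _ = |ψ t| * ‖σ‖ + ε⁻¹ * ‖I‖ := by
          rw [norm_smul, norm_smul, Real.norm_eq_abs, Real.norm_eq_abs,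
            abs_of_nonneg (by positivity : (0:ℝ) ≤ ε⁻¹)]
  calc ‖ψ t • σ + ε⁻¹ • I‖ * Real.exp (ρ / ε * t)
      ≤ (|ψ t| * ‖σ‖ + ε⁻¹ * ‖I‖) * Real.exp (ρ / ε * t) := by
        apply mul_le_mul_of_nonneg_right htri hexppos.le
    _ = (|ψ t| * Real.exp (ρ / ε * t)) * ‖σ‖
        + (ε⁻¹ * ‖I‖ * Real.exp (ρ / ε * t)) := by ring
    _ ≤ (c + δ * ε / ρ) * ‖σ‖ +
        (c / γ₁ + δ * ε / (γ₁ * ρ) + δ * ε / γ₁ ^ 2) * ‖σ'‖ := by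
        apply add_le_add
        · apply mul_le_mul_of_nonneg_right _ (norm_nonneg σ)
          calc |ψ t| * Real.exp (ρ / ε * t)
              ≤ (c + δ * (-t)) * Real.exp (ρ / ε * t) := by
                apply mul_le_mul_of_nonneg_right _ hexppos.le
                have := hψ t ht
                rwa [abs_of_nonpos ht] at this
            _ = c * Real.exp (ρ / ε * t) + δ * ((-t) * Real.exp (ρ / ε * t)) := by ring
            _ ≤ c * 1 + δ * (ε / ρ) := by
                apply add_le_add
                · exact mul_le_mul_of_nonneg_left hexple hc
                · exact mul_le_mul_of_nonneg_left hkey hδ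
            _ = c + δ * ε / ρ := by ring
        · calc ε⁻¹ * ‖I‖ * Real.exp (ρ / ε * t)
              ≤ ε⁻¹ * (((c + δ * (-t))/b + δ/b^2) * ‖σ'‖) * Real.exp (ρ / ε * t) := by
                apply mul_le_mul_of_nonneg_right _ hexppos.le
                exact mul_le_mul_of_nonneg_left hnormI (by positivity)
            _ = (c / γ₁ * Real.exp (ρ / ε * t)
                  + δ / γ₁ * ((-t) * Real.exp (ρ / ε * t))
                  + δ * ε / γ₁^2 * Real.exp (ρ / ε * t)) * ‖σ'‖ := by
                rw [hbdef]
                field_simp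
            _ ≤ (c / γ₁ * 1 + δ / γ₁ * (ε / ρ) + δ * ε / γ₁^2 * 1) * ‖σ'‖ := by
                apply mul_le_mul_of_nonneg_right _ (norm_nonneg σ')
                have e1 : c / γ₁ * Real.exp (ρ / ε * t) ≤ c / γ₁ * 1 :=
                  mul_le_mul_of_nonneg_left hexple (by positivity)
                have e2 : δ / γ₁ * ((-t) * Real.exp (ρ / ε * t)) ≤ δ / γ₁ * (ε / ρ) :=
                  mul_le_mul_of_nonneg_left hkey (by positivity)
                have e3 : δ * ε / γ₁^2 * Real.exp (ρ / ε * t) ≤ δ * ε / γ₁^2 * 1 :=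
                  mul_le_mul_of_nonneg_left hexple (by positivity)
                linarith
            _ = (c / γ₁ + δ * ε / (γ₁ * ρ) + δ * ε / γ₁ ^ 2) * ‖σ'‖ := by
                congr 1
                field_simp
end

section
/- Suppose (X, Y) ∈ C^− and Y satisfies the mild equation Y(t) = G(t)ξ + ∫_0^t G(t−s) g(X(s)+x̂(s), Y(s)) ds for all t ≤ 0, for some ξ ∈ H₂. Then the weighted norm of Y obeys the a priori bound ‖Y‖₂ ≤ ‖ξ‖ + ( εK/(ρ − εγ₂) ) ( ‖X‖₁ + ‖Y‖₂ + ‖x̂‖₁ ). -/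
open MeasureTheory

/-- The weighted sup-norm `‖φ‖ = sup_{t ≤ 0} e^{w t} ‖φ(t)‖` on paths `(-∞,0] → H`
(with weight `w = ρ/ε`). -/
noncomputable def wnorm {H : Type*} [NormedAddCommGroup H] (w : ℝ) (φ : ℝ → H) : ℝ :=
  ⨆ t : Set.Iic (0:ℝ), Real.exp (w * t.1) * ‖φ t.1‖

/-- Membership in the weighted space `C⁻_w`: continuity on `(-∞,0]` together with
finiteness of the weighted sup-norm `sup_{t ≤ 0} e^{w t} ‖φ(t)‖`. -/
def MemCminus {H : Type*} [NormedAddCommGroup H] (w : ℝ) (φ : ℝ → H) : Prop :=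
  ContinuousOn φ (Set.Iic 0) ∧
    BddAbove (Set.range (fun t : Set.Iic (0:ℝ) => Real.exp (w * t.1) * ‖φ t.1‖))

lemma norm_le_exp_mul_wnorm {H : Type*} [NormedAddCommGroup H] {w : ℝ} {φ : ℝ → H}
    (h : BddAbove (Set.range (fun t : Set.Iic (0:ℝ) => Real.exp (w * t.1) * ‖φ t.1‖)))
    {s : ℝ} (hs : s ≤ 0) :
    ‖φ s‖ ≤ Real.exp (-(w * s)) * wnorm w φ := by
  have h1 : Real.exp (w * s) * ‖φ s‖ ≤ wnorm w φ := le_ciSup h ⟨s, hs⟩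
  have h2 : ‖φ s‖ = Real.exp (-(w * s)) * (Real.exp (w * s) * ‖φ s‖) := by
    rw [← mul_assoc, ← Real.exp_add]; simp
  rw [h2]
  exact mul_le_mul_of_nonneg_left h1 (Real.exp_pos _).le

lemma wnorm_nonneg' {H : Type*} [NormedAddCommGroup H] {w : ℝ} {φ : ℝ → H}
    (h : BddAbove (Set.range (fun t : Set.Iic (0:ℝ) => Real.exp (w * t.1) * ‖φ t.1‖))) :
    0 ≤ wnorm w φ :=
  le_trans (by positivity) (le_ciSup h ⟨0, Set.self_mem_Iic⟩)

/-- Suppose `(X,Y) ∈ C⁻` and `Y` satisfies the mild equation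
`Y(t) = G(t)ξ + ∫_0^t G(t-s) g(X(s)+x̂(s), Y(s)) ds` for all `t ≤ 0`. Then the weighted
norm of `Y` obeys the a priori bound
`‖Y‖₂ ≤ ‖ξ‖ + (εK/(ρ - εγ₂)) (‖X‖₁ + ‖Y‖₂ + ‖x̂‖₁)`. -/
theorem stmt16
    {H₁ H₂ : Type*}
    [NormedAddCommGroup H₁] [InnerProductSpace ℝ H₁] [CompleteSpace H₁]
    [TopologicalSpace.SeparableSpace H₁]
    [NormedAddCommGroup H₂] [InnerProductSpace ℝ H₂] [CompleteSpace H₂]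
    [TopologicalSpace.SeparableSpace H₂]
    (G : ℝ → H₂ →L[ℝ] H₂) (γ₂ : ℝ) (hγ₂ : 0 < γ₂)
    (hG0 : G 0 = 1)
    (hGadd : ∀ t s : ℝ, G (t + s) = (G t).comp (G s))
    (hGcont : ∀ w : H₂, Continuous fun t : ℝ => G t w)
    (hGdecay : ∀ t : ℝ, t ≤ 0 → ∀ w : H₂, ‖G t w‖ ≤ Real.exp (-γ₂ * t) * ‖w‖)
    (g : H₁ × H₂ → H₂) (K : ℝ) (hK : 0 < K)
    (hg : ∀ p q : H₁ × H₂, ‖g p - g q‖ ≤ K * (‖p.1 - q.1‖ + ‖p.2 - q.2‖))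
    (hg0 : g (0, 0) = 0)
    (ε ρ : ℝ) (hε : 0 < ε) (hρ : 0 < ρ) (hρε : 0 < ρ - ε * γ₂)
    (xhat : ℝ → H₁) (hxhat : MemCminus (ρ / ε) xhat)
    (X : ℝ → H₁) (Y : ℝ → H₂)
    (hX : MemCminus (ρ / ε) X) (hY : MemCminus (ρ / ε) Y)
    (ξ : H₂)
    (hYeq : ∀ t : ℝ, t ≤ 0 →
      Y t = G t ξ + ∫ s in (0:ℝ)..t, G (t - s) (g (X s + xhat s, Y s))) :
    wnorm (ρ / ε) Y ≤
      ‖ξ‖ + ε * K / (ρ - ε * γ₂) *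
        (wnorm (ρ / ε) X + wnorm (ρ / ε) Y + wnorm (ρ / ε) xhat) := by
  have hεne : ε ≠ 0 := ne_of_gt hε
  set w : ℝ := ρ / ε with hw
  set c : ℝ := w - γ₂ with hcdef
  have hcpos : 0 < c := by
    have h1 : c = (ρ - ε * γ₂) / ε := by rw [hcdef, hw]; field_simp
    rw [h1]; positivity
  set M : ℝ := wnorm w X + wnorm w Y + wnorm w xhat with hM
  have hMnonneg : 0 ≤ M := by
    have h1 := wnorm_nonneg' hX.2
    have h2 := wnorm_nonneg' hY.2
    have h3 := wnorm_nonneg' hxhat.2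
    rw [hM]; linarith
  -- g is continuous
  have hgcont : Continuous g := by
    have hlip : LipschitzWith (Real.toNNReal (2 * K)) g := by
      apply LipschitzWith.of_dist_le_mul
      intro p q
      have h2 : dist p q = max (dist p.1 q.1) (dist p.2 q.2) := Prod.dist_eq
      have h4 : ‖p.1 - q.1‖ ≤ dist p q := by
        rw [h2, ← dist_eq_norm]; exact le_max_left _ _
      have h5 : ‖p.2 - q.2‖ ≤ dist p q := by
        rw [h2, ← dist_eq_norm]; exact le_max_right _ _
      have hd : (0:ℝ) ≤ dist p q := dist_nonneg
      calc dist (g p) (g q) = ‖g p - g q‖ := dist_eq_norm _ _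
        _ ≤ K * (‖p.1 - q.1‖ + ‖p.2 - q.2‖) := hg p q
        _ ≤ (Real.toNNReal (2 * K)) * dist p q := by
            rw [Real.coe_toNNReal _ (by positivity)]
            nlinarith
    exact hlip.continuous
  have hgnorm : ∀ (a : H₁) (b : H₂), ‖g (a, b)‖ ≤ K * (‖a‖ + ‖b‖) := by
    intro a b
    have h0 : g 0 = 0 := by rw [← Prod.mk_zero_zero, hg0]
    have := hg (a, b) (0, 0)
    simpa [h0, hg0] using this
  -- continuity of s ↦ G (t - s) (v s)
  have hGapp : ∀ (t : ℝ), t ≤ 0 → ∀ (v : ℝ → H₂), ContinuousOn v (Set.Icc t 0) →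
      ContinuousOn (fun s => G (t - s) (v s)) (Set.Icc t 0) := by
    intro t ht v hv s₀ hs₀
    have hts : Filter.Tendsto (fun s => ‖G (t - s) (v s) - G (t - s₀) (v s₀)‖)
        (nhdsWithin s₀ (Set.Icc t 0)) (nhds 0) := by
      apply squeeze_zero' (Filter.Eventually.of_forall fun s => norm_nonneg _)
        (g := fun s => Real.exp (-γ₂ * t) * ‖v s - v s₀‖ +
          ‖G (t - s) (v s₀) - G (t - s₀) (v s₀)‖)
      · filter_upwards [self_mem_nhdsWithin] with s hs
        have hts0 : t - s ≤ 0 := by linarith [hs.1]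
        have key : G (t - s) (v s) - G (t - s₀) (v s₀)
            = G (t - s) (v s - v s₀) + (G (t - s) (v s₀) - G (t - s₀) (v s₀)) := by
          rw [map_sub]; abel
        rw [key]
        refine le_trans (norm_add_le _ _) ?_
        have h1 := hGdecay (t - s) hts0 (v s - v s₀)
        have h2 : Real.exp (-γ₂ * (t - s)) ≤ Real.exp (-γ₂ * t) := by
          apply Real.exp_le_exp.mpr
          nlinarith [mul_nonneg hγ₂.le (neg_nonneg.mpr hs.2)]
        have h3 : ‖G (t - s) (v s - v s₀)‖ ≤ Real.exp (-γ₂ * t) * ‖v s - v s₀‖ :=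
          le_trans h1 (mul_le_mul_of_nonneg_right h2 (norm_nonneg _))
        linarith
      · have h1 : Filter.Tendsto (fun s => ‖v s - v s₀‖)
            (nhdsWithin s₀ (Set.Icc t 0)) (nhds 0) := by
          have h0 : Filter.Tendsto v (nhdsWithin s₀ (Set.Icc t 0)) (nhds (v s₀)) :=
            hv s₀ hs₀
          have h := (h0.sub (tendsto_const_nhds (x := v s₀))).norm
          simp only [sub_self, norm_zero] at h
          exact h
        have h2 : Filter.Tendsto (fun s => ‖G (t - s) (v s₀) - G (t - s₀) (v s₀)‖)
            (nhdsWithin s₀ (Set.Icc t 0)) (nhds 0) := by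
          have hc : Continuous (fun s : ℝ => G (t - s) (v s₀)) :=
            (hGcont (v s₀)).comp (continuous_const.sub continuous_id)
          have := ((hc.tendsto s₀).sub (tendsto_const_nhds (x := G (t - s₀) (v s₀)))).norm
          simp only [sub_self, norm_zero] at this
          exact this.mono_left nhdsWithin_le_nhds
        have := (h1.const_mul (Real.exp (-γ₂ * t))).add h2
        simpa using this
    exact tendsto_iff_norm_sub_tendsto_zero.mpr hts
  haveI : Nonempty (Set.Iic (0:ℝ)) := ⟨⟨0, Set.self_mem_Iic⟩⟩
  apply ciSup_le
  rintro ⟨t, ht⟩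
  show Real.exp (w * t) * ‖Y t‖ ≤ ‖ξ‖ + ε * K / (ρ - ε * γ₂) * M
  rw [hYeq t ht]
  set f : ℝ → H₂ := fun s => G (t - s) (g (X s + xhat s, Y s)) with hf
  have hsub : Set.Icc t 0 ⊆ Set.Iic (0:ℝ) := fun x hx => hx.2
  have hvcont : ContinuousOn (fun s => g (X s + xhat s, Y s)) (Set.Icc t 0) :=
    hgcont.comp_continuousOn
      (ContinuousOn.prodMk ((hX.1.mono hsub).add (hxhat.1.mono hsub)) (hY.1.mono hsub))
  have hfcont : ContinuousOn f (Set.Icc t 0) := hGapp t ht _ hvcont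
  have huIcc : Set.uIcc t 0 = Set.Icc t 0 := Set.uIcc_of_le ht
  have hfint : IntervalIntegrable f volume t 0 := by
    apply ContinuousOn.intervalIntegrable; rwa [huIcc]
  set φb : ℝ → ℝ := fun s => K * M * Real.exp (-γ₂ * t) * Real.exp (-(c * s)) with hφb
  have hφbcont : Continuous φb := by rw [hφb]; fun_prop
  have hφbint : IntervalIntegrable φb volume t 0 := hφbcont.intervalIntegrable t 0
  have hptw : ∀ s ∈ Set.Icc t 0, ‖f s‖ ≤ φb s := by
    intro s hs
    have hs0 : s ≤ 0 := hs.2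
    have hts0 : t - s ≤ 0 := by linarith [hs.1]
    have hbX := norm_le_exp_mul_wnorm hX.2 hs0
    have hbY := norm_le_exp_mul_wnorm hY.2 hs0
    have hbx := norm_le_exp_mul_wnorm hxhat.2 hs0
    have h2 : ‖X s‖ + ‖xhat s‖ + ‖Y s‖ ≤ Real.exp (-(w * s)) * M := by
      have hMe : Real.exp (-(w * s)) * M = Real.exp (-(w * s)) * wnorm w X +
          Real.exp (-(w * s)) * wnorm w Y + Real.exp (-(w * s)) * wnorm w xhat := by
        rw [hM]; ring
      rw [hMe]; linarith
    have hgb : ‖g (X s + xhat s, Y s)‖ ≤ K * (Real.exp (-(w * s)) * M) := by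
      calc ‖g (X s + xhat s, Y s)‖ ≤ K * (‖X s + xhat s‖ + ‖Y s‖) := hgnorm _ _
        _ ≤ K * (Real.exp (-(w * s)) * M) := by
            apply mul_le_mul_of_nonneg_left _ hK.le
            have := norm_add_le (X s) (xhat s)
            linarith
    calc ‖f s‖ ≤ Real.exp (-γ₂ * (t - s)) * ‖g (X s + xhat s, Y s)‖ := hGdecay _ hts0 _
      _ ≤ Real.exp (-γ₂ * (t - s)) * (K * (Real.exp (-(w * s)) * M)) :=
          mul_le_mul_of_nonneg_left hgb (Real.exp_pos _).le
      _ = φb s := by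
          rw [hφb]
          simp only []
          rw [show (-γ₂ * (t - s)) = (-γ₂ * t) + (γ₂ * s) by ring, Real.exp_add,
            show (-(c * s)) = (γ₂ * s) + (-(w * s)) by rw [hcdef]; ring, Real.exp_add]
          ring
  have hexp_int : ∫ s in t..(0:ℝ), Real.exp (-(c * s)) = (Real.exp (-(c * t)) - 1) / c := by
    have hder : ∀ s ∈ Set.uIcc t (0:ℝ), HasDerivAt (fun u => -Real.exp (-(c * u)) / c)
        (Real.exp (-(c * s))) s := by
      intro s _
      have h1 : HasDerivAt (fun u : ℝ => -(c * u)) (-c) s := by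
        simpa using ((hasDerivAt_id s).const_mul c).fun_neg
      have h2 : HasDerivAt (fun u : ℝ => Real.exp (-(c * u)))
          (Real.exp (-(c * s)) * (-c)) s := h1.exp
      have h3 := (h2.fun_neg).div_const c
      rw [mul_neg, neg_neg, mul_div_assoc, div_self hcpos.ne', mul_one] at h3
      exact h3
    have hci : IntervalIntegrable (fun s => Real.exp (-(c * s))) volume t 0 := by
      apply Continuous.intervalIntegrable; fun_prop
    rw [intervalIntegral.integral_eq_sub_of_hasDerivAt hder hci]
    simp only [mul_zero, neg_zero, Real.exp_zero]
    ring
  have hint_norm : ‖∫ s in (0:ℝ)..t, f s‖ ≤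
      K * M * Real.exp (-γ₂ * t) * ((Real.exp (-(c * t)) - 1) / c) := by
    rw [intervalIntegral.integral_symm, norm_neg]
    calc ‖∫ s in t..(0:ℝ), f s‖ ≤ ∫ s in t..(0:ℝ), ‖f s‖ :=
          intervalIntegral.norm_integral_le_integral_norm ht
      _ ≤ ∫ s in t..(0:ℝ), φb s :=
          intervalIntegral.integral_mono_on ht hfint.norm hφbint hptw
      _ = K * M * Real.exp (-γ₂ * t) * ((Real.exp (-(c * t)) - 1) / c) := by
          rw [hφb]
          rw [intervalIntegral.integral_const_mul, hexp_int]
  have hGξ : Real.exp (w * t) * ‖G t ξ‖ ≤ ‖ξ‖ := by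
    have h1 := hGdecay t ht ξ
    have h3 : Real.exp (c * t) ≤ 1 :=
      Real.exp_le_one_iff.mpr (mul_nonpos_of_nonneg_of_nonpos hcpos.le ht)
    have h2 : Real.exp (w * t) * Real.exp (-γ₂ * t) = Real.exp (c * t) := by
      rw [← Real.exp_add]; congr 1; rw [hcdef]; ring
    calc Real.exp (w * t) * ‖G t ξ‖ ≤ Real.exp (w * t) * (Real.exp (-γ₂ * t) * ‖ξ‖) :=
          mul_le_mul_of_nonneg_left h1 (Real.exp_pos _).le
      _ = Real.exp (c * t) * ‖ξ‖ := by rw [← mul_assoc, h2]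
      _ ≤ 1 * ‖ξ‖ := mul_le_mul_of_nonneg_right h3 (norm_nonneg _)
      _ = ‖ξ‖ := one_mul _
  have hfinal : Real.exp (w * t) * (K * M * Real.exp (-γ₂ * t) * ((Real.exp (-(c * t)) - 1) / c))
      ≤ ε * K / (ρ - ε * γ₂) * M := by
    have e1 : Real.exp (w * t) * Real.exp (-γ₂ * t) = Real.exp (c * t) := by
      rw [← Real.exp_add]; congr 1; rw [hcdef]; ring
    have e2 : Real.exp (c * t) * Real.exp (-(c * t)) = 1 := by
      rw [← Real.exp_add]; simp
    have e3 : 0 < Real.exp (c * t) := Real.exp_pos _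
    have e4 : ε * K / (ρ - ε * γ₂) = K / c := by
      rw [hcdef, hw]; field_simp
    have ekey : Real.exp (w * t) * Real.exp (-γ₂ * t) * (Real.exp (-(c * t)) - 1)
        = 1 - Real.exp (c * t) := by
      rw [e1, mul_sub, e2]; ring
    have e5 : Real.exp (w * t) * (K * M * Real.exp (-γ₂ * t) * ((Real.exp (-(c * t)) - 1) / c))
        = K * M * (1 - Real.exp (c * t)) / c := by
      calc Real.exp (w * t) * (K * M * Real.exp (-γ₂ * t) * ((Real.exp (-(c * t)) - 1) / c))
          = (Real.exp (w * t) * Real.exp (-γ₂ * t) * (Real.exp (-(c * t)) - 1)) * (K * M / c) := by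
            ring
        _ = (1 - Real.exp (c * t)) * (K * M / c) := by rw [ekey]
        _ = K * M * (1 - Real.exp (c * t)) / c := by ring
    rw [e5, e4]
    have h6 : K * M * (1 - Real.exp (c * t)) ≤ K * M * 1 := by nlinarith [mul_nonneg (mul_nonneg hK.le hMnonneg) e3.le]
    calc K * M * (1 - Real.exp (c * t)) / c ≤ K * M * 1 / c :=
          (div_le_div_iff_of_pos_right hcpos).mpr h6
      _ = K / c * M := by ring
  calc Real.exp (w * t) * ‖G t ξ + ∫ s in (0:ℝ)..t, f s‖
      ≤ Real.exp (w * t) * (‖G t ξ‖ + ‖∫ s in (0:ℝ)..t, f s‖) :=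
        mul_le_mul_of_nonneg_left (norm_add_le _ _) (Real.exp_pos _).le
    _ = Real.exp (w * t) * ‖G t ξ‖ + Real.exp (w * t) * ‖∫ s in (0:ℝ)..t, f s‖ := by ring
    _ ≤ ‖ξ‖ + ε * K / (ρ - ε * γ₂) * M := by
        have h2 : Real.exp (w * t) * ‖∫ s in (0:ℝ)..t, f s‖ ≤ ε * K / (ρ - ε * γ₂) * M :=
          le_trans (mul_le_mul_of_nonneg_left hint_norm (Real.exp_pos _).le) hfinal
        linarith
end
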